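/- There exists a constant C > 0 such that for every ζ ∈ [−N, 0) and every real u ∈ (−√2·k₀, −k₀/2] ∪ [k₀/2, ∞), the point k = k₀ + u·e^{iπ/4} satisfies C⁻¹ ≤ |δ(ζ, k)| ≤ C; i.e. both δ(ζ,k) and δ(ζ,k)⁻¹ are uniformly bounded on the ray γ = {k₀ + u e^{iπ/4} : u ∈ (−√2 k₀, −k₀/2] ∪ [k₀/2, ∞)}, uniformly with respect to ζ ∈ I. (This is the key estimate (4.13) in the proof of the paper's Lemma 4.1, restricted to the ray γ.) -/

import Mathlib

/-!
On the ray the spectral variable stays at distance at least `k₀ √2 / 4` from the real axis, hence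
from the contour `[-k₀, k₀]`, while the contour has length `2 k₀`. The Cauchy integral defining
`log δ` is therefore bounded by `4 √2 sup |L|`, independently of `ζ`, and `δ = exp (log δ)` is
bounded above and away from zero.
-/

open Set MeasureTheory

noncomputable section

def k0 (ζ : ℝ) : ℝ := Real.sqrt (-ζ / 12)

def delta (L : ℝ → ℂ) (ζ : ℝ) (k : ℂ) : ℂ :=
  Complex.exp ((2 * Real.pi * Complex.I)⁻¹ *
    ∫ s in (-(k0 ζ))..(k0 ζ), L s / ((s : ℂ) - k))

def e4 : ℂ := Complex.exp (Real.pi * Complex.I / 4)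

lemma norm_intervalIntegral_div_sub_le {f : ℝ → ℂ} {a b M : ℝ} {k : ℂ} (hk : k.im ≠ 0)
    (hf : ∀ s ∈ uIoc a b, ‖f s‖ ≤ M) :
    ‖∫ s in a..b, f s / ((s : ℂ) - k)‖ ≤ M / |k.im| * |b - a| := by
  refine intervalIntegral.norm_integral_le_of_norm_le_const fun s hs => ?_
  have hM : 0 ≤ M := (norm_nonneg _).trans (hf s hs)
  have hdist : |k.im| ≤ ‖(s : ℂ) - k‖ := by
    simpa using Complex.abs_im_le_norm ((s : ℂ) - k)
  rw [norm_div]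
  exact div_le_div₀ hM (hf s hs) (abs_pos.mpr hk) hdist

lemma Complex.inv_exp_le_norm_exp_and_norm_exp_le {z : ℂ} {B : ℝ} (hz : ‖z‖ ≤ B) :
    (Real.exp B)⁻¹ ≤ ‖Complex.exp z‖ ∧ ‖Complex.exp z‖ ≤ Real.exp B := by
  have hre := abs_le.mp ((Complex.abs_re_le_norm z).trans hz)
  rw [Complex.norm_exp, ← Real.exp_neg]
  exact ⟨Real.exp_le_exp.mpr hre.1, Real.exp_le_exp.mpr hre.2⟩

lemma e4_im : e4.im = Real.sqrt 2 / 2 := by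
  have h : (Real.pi * Complex.I / 4 : ℂ) = ((Real.pi / 4 : ℝ) : ℂ) * Complex.I := by
    push_cast; ring
  rw [e4, h, Complex.exp_ofReal_mul_I_im, Real.sin_pi_div_four]

lemma le_abs_im_ofReal_add_mul_e4 {c u : ℝ} (hu : c / 2 ≤ |u|) :
    c * (Real.sqrt 2 / 4) ≤ |((c : ℂ) + u * e4).im| := by
  have him : ((c : ℂ) + u * e4).im = u * (Real.sqrt 2 / 2) := by simp [e4_im]
  rw [him, abs_mul, abs_of_nonneg (by positivity : (0 : ℝ) ≤ Real.sqrt 2 / 2)]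
  nlinarith [Real.sqrt_nonneg 2]

lemma norm_integral_div_sub_ofReal_add_mul_e4_le {f : ℝ → ℂ} {c u M : ℝ} (hc : 0 < c)
    (hu : c / 2 ≤ |u|) (hf : ∀ s ∈ Icc (-c) c, ‖f s‖ ≤ M) :
    ‖∫ s in (-c)..c, f s / ((s : ℂ) - (c + u * e4))‖ ≤ 4 * Real.sqrt 2 * M := by
  have hd : 0 < c * (Real.sqrt 2 / 4) := by positivity
  have him := le_abs_im_ofReal_add_mul_e4 hu
  have hf' : ∀ s ∈ uIoc (-c) c, ‖f s‖ ≤ M := fun s hs => by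
    rw [uIoc_of_le (by linarith)] at hs
    exact hf s (Ioc_subset_Icc_self hs)
  have hM : 0 ≤ M := (norm_nonneg _).trans (hf c ⟨by linarith, le_rfl⟩)
  calc ‖∫ s in (-c)..c, f s / ((s : ℂ) - (c + u * e4))‖
      ≤ M / |((c : ℂ) + u * e4).im| * |c - -c| :=
        norm_intervalIntegral_div_sub_le (abs_pos.mp (hd.trans_le him)) hf'
    _ ≤ M / (c * (Real.sqrt 2 / 4)) * (2 * c) := by
        rw [sub_neg_eq_add, ← two_mul, abs_of_pos (by positivity : (0 : ℝ) < 2 * c)]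
        gcongr
    _ = 4 * Real.sqrt 2 * M := by
        field_simp
        linear_combination (-M) * Real.mul_self_sqrt (zero_le_two : (0 : ℝ) ≤ 2)

lemma norm_delta_bounds_of_norm_integral_le {L : ℝ → ℂ} {ζ A : ℝ} {k : ℂ}
    (h : ‖∫ s in (-(k0 ζ))..(k0 ζ), L s / ((s : ℂ) - k)‖ ≤ A) :
    (Real.exp ((2 * Real.pi)⁻¹ * A))⁻¹ ≤ ‖delta L ζ k‖ ∧
      ‖delta L ζ k‖ ≤ Real.exp ((2 * Real.pi)⁻¹ * A) := by
  refine Complex.inv_exp_le_norm_exp_and_norm_exp_le ?_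
  have hnorm : ‖(2 * Real.pi * Complex.I : ℂ)⁻¹‖ = (2 * Real.pi)⁻¹ := by
    simp [Complex.norm_I, abs_of_pos Real.pi_pos]
  rw [norm_mul, hnorm]
  gcongr

theorem delta_uniformly_bounded_on_ray_general (N : ℝ) (L : ℝ → ℂ)
    (hL : ContDiffOn ℝ 1 L (Icc (-Real.sqrt (N / 12)) (Real.sqrt (N / 12)))) :
    ∃ C : ℝ, 0 < C ∧ ∀ ζ ∈ Ico (-N) (0 : ℝ), ∀ u : ℝ,
      u ∈ Ioc (-(Real.sqrt 2 * k0 ζ)) (-(k0 ζ / 2)) ∪ Ici (k0 ζ / 2) →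
      C⁻¹ ≤ ‖delta L ζ ((k0 ζ : ℂ) + (u : ℂ) * e4)‖ ∧
      ‖delta L ζ ((k0 ζ : ℂ) + (u : ℂ) * e4)‖ ≤ C := by
  obtain ⟨M, hM⟩ := isCompact_Icc.exists_bound_of_continuousOn hL.continuousOn
  refine ⟨Real.exp ((2 * Real.pi)⁻¹ * (4 * Real.sqrt 2 * M)), Real.exp_pos _, ?_⟩
  intro ζ hζ u hu
  have hk0 : 0 < k0 ζ := Real.sqrt_pos.mpr (by linarith [hζ.2])
  have hk0N : k0 ζ ≤ Real.sqrt (N / 12) := Real.sqrt_le_sqrt (by linarith [hζ.1])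
  have hu : k0 ζ / 2 ≤ |u| := by
    rcases hu with h | h
    · exact le_abs.mpr (Or.inr (by linarith [h.2]))
    · exact le_abs.mpr (Or.inl h)
  refine norm_delta_bounds_of_norm_integral_le
    (norm_integral_div_sub_ofReal_add_mul_e4_le hk0 hu fun s hs => hM s ⟨?_, hs.2.trans hk0N⟩)
  linarith [hs.1]

/-- Estimate (4.13): δ(ζ,·)^{±1} is uniformly bounded on the ray
γ = {k₀ + u e^{iπ/4} : u ∈ (-√2 k₀, -k₀/2] ∪ [k₀/2, ∞)}, uniformly for ζ ∈ [-N,0). -/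
theorem delta_uniformly_bounded_on_ray (N : ℝ) (hN : 0 < N) (L : ℝ → ℂ)
    (hL : ContDiffOn ℝ 1 L (Icc (-Real.sqrt (N / 12)) (Real.sqrt (N / 12))))
    (hsym : ∀ s ∈ Icc (-Real.sqrt (N / 12)) (Real.sqrt (N / 12)),
      L (-s) = starRingEnd ℂ (L s)) :
    ∃ C : ℝ, 0 < C ∧ ∀ ζ ∈ Ico (-N) (0 : ℝ), ∀ u : ℝ,
      u ∈ Ioc (-(Real.sqrt 2 * k0 ζ)) (-(k0 ζ / 2)) ∪ Ici (k0 ζ / 2) →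
      C⁻¹ ≤ ‖delta L ζ ((k0 ζ : ℂ) + (u : ℂ) * e4)‖ ∧
      ‖delta L ζ ((k0 ζ : ℂ) + (u : ℂ) * e4)‖ ≤ C :=
  delta_uniformly_bounded_on_ray_general N L hL
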